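/- Let q be a prime power, Λ ⊂ F_q^* of size ℓ with 1 ≤ k ≤ ℓ - 1, and γ ∈ F_{q^2}^* with γ^{q+1} not a square in F_q^*. Then the additive twisted Reed–Solomon code C_k(γ) = ev_Λ(D_k(γ)) ⊆ F_{q^2}^ℓ is an F_q-linear code of F_q-dimension 2k with minimum Hamming distance exactly ℓ - k + 1, i.e., it attains the additive Singleton bound d ≤ ℓ - k + 1 with equality. -/

import Mathlib

/-- Evaluation of the twisted space D_k(γ) at the points of Λ. -/
def twistedEval (K L : Type*) [Field K] [Field L] [Algebra K L]
    (γ : L) (k : ℕ) (Λ : Finset L) : K × K × (Fin (k - 1) → L) → (Λ → L) :=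
  fun p x => algebraMap K L p.1 + (∑ i : Fin (k - 1), p.2.2 i * (x : L) ^ ((i : ℕ) + 1))
    + γ * algebraMap K L p.2.1 * (x : L) ^ k

/-!
Identify a parameter vector `p` with the polynomial `fₚ = a₀ + Σ aᵢ Xⁱ + γ aₖ Xᵏ`, whose evaluation
on `Λ` is the codeword. A nonzero `fₚ` has at most `k - 1` zeros in `Λ`: otherwise it has degree `k`
and splits with its `k` roots in `Λ ⊆ Kˣ`, so comparing its constant and leading coefficients gives
`γ ∈ K`, and then `γ ^ (q + 1) = γ ^ 2` is a nonzero square. Hence every nonzero codeword has weight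
at least `ℓ - k + 1`, evaluation is injective and the code has dimension `2 + 2 (k - 1) = 2k`.
For `S ⊆ Λ` with `k - 1` elements, `∏_{a ∈ S} (X - a)` has constant term in `K`, so it is some `fₚ`,
and its codeword has weight exactly `ℓ - k + 1`.
-/

open Polynomial Finset

lemma hammingNorm_subtype_add_card_filter_eq_zero {α β : Type*} [DecidableEq α] [Zero β]
    [DecidableEq β] (Λ : Finset α) (f : α → β) :
    hammingNorm (fun x : Λ => f x) + #{x ∈ Λ | f x = 0} = #Λ := by
  have : hammingNorm (fun x : Λ => f x) = #{x ∈ Λ | f x ≠ 0} := by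
    rw [hammingNorm, univ_eq_attach, filter_attach (fun x => f x ≠ 0), card_map, card_attach]
  rw [this, add_comm]
  exact card_filter_add_card_filter_not ..

lemma notMem_fieldRange_of_forall_sq_ne {K L : Type*} [Field K] [Fintype K] [Field L]
    [Algebra K L] {q : ℕ} (hK : Fintype.card K = q) {γ : L} (hγ : γ ≠ 0)
    (hns : ¬ ∃ s : K, s ≠ 0 ∧ algebraMap K L (s ^ 2) = γ ^ (q + 1)) :
    γ ∉ (algebraMap K L).fieldRange := by
  rintro ⟨s, rfl⟩
  refine hns ⟨s, fun hs => hγ (by simp [hs]), ?_⟩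
  rw [← map_pow, ← hK, pow_succ s (Fintype.card K), FiniteField.pow_card, sq]

lemma coeff_zero_div_leadingCoeff_mem {L : Type*} [Field L] {F : Subfield L} {f : L[X]}
    (hf : f.Splits) (hF : ∀ x ∈ f.roots, x ∈ F) : f.coeff 0 / f.leadingCoeff ∈ F := by
  rcases eq_or_ne f.leadingCoeff 0 with h | h
  · simp [h]
  · rw [hf.coeff_zero_eq_leadingCoeff_mul_prod_roots, mul_right_comm, mul_div_cancel_right₀ _ h]
    exact mul_mem (pow_mem (neg_mem (one_mem F)) _) (multiset_prod_mem _ hF)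

lemma roots_eq_val_of_natDegree_le_card {R : Type*} [CommRing R] [IsDomain R] [DecidableEq R]
    {f : R[X]} (hf : f ≠ 0) {Z : Finset R} (hZ : ∀ x ∈ Z, f.IsRoot x) (hdeg : f.natDegree ≤ #Z) :
    f.roots = Z.val := by
  have hle : Z.val ≤ f.roots :=
    (Multiset.le_iff_subset Z.nodup).mpr fun x hx => (mem_roots hf).mpr (hZ x hx)
  exact (Multiset.eq_of_le_of_card_le hle ((card_roots' f).trans (hdeg.trans (card_val Z).ge))).symm

section TwistedPoly

variable {K L : Type*} [Field K] [Field L] [Algebra K L] (γ : L) (k : ℕ)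

noncomputable def twistedPoly (p : K × K × (Fin (k - 1) → L)) : L[X] :=
  C (algebraMap K L p.1) + ∑ i : Fin (k - 1), C (p.2.2 i) * X ^ ((i : ℕ) + 1)
    + C (γ * algebraMap K L p.2.1) * X ^ k

lemma twistedEval_eq (Λ : Finset L) (p : K × K × (Fin (k - 1) → L)) :
    twistedEval K L γ k Λ p = fun x : Λ => (twistedPoly γ k p).eval (x : L) := by
  ext x
  simp [twistedEval, twistedPoly, eval_finsetSum]

lemma natDegree_twistedPoly_le (p : K × K × (Fin (k - 1) → L)) :
    (twistedPoly γ k p).natDegree ≤ k := by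
  refine natDegree_add_le_of_degree_le (natDegree_add_le_of_degree_le ?_ ?_)
    (natDegree_C_mul_X_pow_le _ _)
  · simp
  · exact natDegree_sum_le_of_forall_le _ _ fun i _ =>
      (natDegree_C_mul_X_pow_le _ _).trans (by omega)

variable {k}

lemma coeff_twistedPoly_zero (hk : k ≠ 0) (p : K × K × (Fin (k - 1) → L)) :
    (twistedPoly γ k p).coeff 0 = algebraMap K L p.1 := by
  simp [twistedPoly, coeff_X_pow, Ne.symm hk]

lemma coeff_twistedPoly_self (hk : k ≠ 0) (p : K × K × (Fin (k - 1) → L)) :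
    (twistedPoly γ k p).coeff k = γ * algebraMap K L p.2.1 := by
  have hne (i : Fin (k - 1)) : k ≠ (i : ℕ) + 1 := by omega
  simp [twistedPoly, coeff_X_pow, coeff_C, mul_assoc, coeff_C_mul, hk, hne]

lemma coeff_twistedPoly_succ (p : K × K × (Fin (k - 1) → L)) (i : Fin (k - 1)) :
    (twistedPoly γ k p).coeff ((i : ℕ) + 1) = p.2.2 i := by
  have hik : (i : ℕ) + 1 ≠ k := by omega
  simp [twistedPoly, coeff_X_pow, mul_assoc, coeff_C_mul, hik, Fin.val_inj]

lemma exists_twistedPoly_eq (hk : k ≠ 0) {f : L[X]} (hf : f.natDegree < k)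
    (hf₀ : f.coeff 0 ∈ (algebraMap K L).fieldRange) :
    ∃ p : K × K × (Fin (k - 1) → L), twistedPoly γ k p = f := by
  obtain ⟨c, hc⟩ := hf₀
  refine ⟨(c, 0, fun i => f.coeff ((i : ℕ) + 1)), ?_⟩
  conv_rhs => rw [f.as_sum_range_C_mul_X_pow' hf]
  obtain ⟨m, rfl⟩ := Nat.exists_eq_add_one_of_ne_zero hk
  rw [sum_range_succ', ← Fin.sum_univ_eq_sum_range (fun i => C (f.coeff (i + 1)) * X ^ (i + 1))]
  simp [twistedPoly, hc, add_comm]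

end TwistedPoly

section TwistedPolyRoots

variable {K L : Type*} [Field K] [Field L] [Algebra K L] {γ : L} {k : ℕ}

lemma twistedPoly_eq_zero_iff (hγ : γ ≠ 0) (hk : k ≠ 0) {p : K × K × (Fin (k - 1) → L)} :
    twistedPoly γ k p = 0 ↔ p = 0 := by
  refine ⟨fun h => ?_, fun h => by simp [h, twistedPoly]⟩
  obtain ⟨a₀, aₖ, a⟩ := p
  have h₀ := coeff_twistedPoly_zero γ hk (a₀, aₖ, a)
  have hₖ := coeff_twistedPoly_self γ hk (a₀, aₖ, a)
  have hsucc := coeff_twistedPoly_succ γ (a₀, aₖ, a)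
  simp only [h, coeff_zero, eq_comm (a := (0 : L)), map_eq_zero, mul_eq_zero, hγ,
    false_or] at h₀ hₖ hsucc
  simp only [Prod.mk_eq_zero]
  exact ⟨h₀, hₖ, funext hsucc⟩

lemma card_filter_eval_twistedPoly_eq_zero_le [DecidableEq L]
    (hγ : γ ∉ (algebraMap K L).fieldRange) (hk : k ≠ 0) {Λ : Finset L}
    (hΛ : ∀ x ∈ Λ, ∃ c : K, c ≠ 0 ∧ x = algebraMap K L c)
    {p : K × K × (Fin (k - 1) → L)} (hp : p ≠ 0) :
    #{x ∈ Λ | (twistedPoly γ k p).eval x = 0} ≤ k - 1 := by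
  set f := twistedPoly γ k p
  set Z := {x ∈ Λ | f.eval x = 0}
  have hγ0 : γ ≠ 0 := fun h => hγ (h ▸ zero_mem _)
  have hf : f ≠ 0 := (twistedPoly_eq_zero_iff hγ0 hk).not.mpr hp
  by_contra! hlt
  have hroots : f.roots = Z.val := roots_eq_val_of_natDegree_le_card hf
    (fun x hx => (mem_filter.mp hx).2) ((natDegree_twistedPoly_le γ k p).trans (by omega))
  have hZdeg : #Z ≤ f.natDegree := card_val Z ▸ hroots ▸ card_roots' f
  have hdeg : f.natDegree = k := by
    have : f.natDegree ≤ k := natDegree_twistedPoly_le γ k p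
    omega
  have hsplit : f.Splits := splits_iff_card_roots.mpr (by rw [hroots, card_val]; omega)
  have hlc : f.leadingCoeff = γ * algebraMap K L p.2.1 := by
    rw [leadingCoeff, hdeg, coeff_twistedPoly_self γ hk]
  have hroots_mem (x : L) (hx : x ∈ f.roots) : x ∈ (algebraMap K L).fieldRange ∧ x ≠ 0 := by
    rw [hroots] at hx
    obtain ⟨c, hc, rfl⟩ := hΛ x (mem_filter.mp hx).1
    exact ⟨⟨c, rfl⟩, by simpa using hc⟩
  have ha₀ : algebraMap K L p.1 ≠ 0 := by
    rw [← coeff_twistedPoly_zero γ hk p, coeff_zero_eq_eval_zero]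
    exact fun h => (hroots_mem 0 ((mem_roots hf).mpr h)).2 rfl
  have haₖ : algebraMap K L p.2.1 ≠ 0 :=
    right_ne_zero_of_mul (hlc ▸ leadingCoeff_ne_zero.mpr hf)
  have hquot := coeff_zero_div_leadingCoeff_mem hsplit fun x hx => (hroots_mem x hx).1
  rw [coeff_twistedPoly_zero γ hk, hlc] at hquot
  have hγ_eq : γ = algebraMap K L p.1 / algebraMap K L p.2.1 /
      (algebraMap K L p.1 / (γ * algebraMap K L p.2.1)) := by
    field_simp
  exact hγ (hγ_eq ▸ div_mem (div_mem ⟨_, rfl⟩ ⟨_, rfl⟩) hquot)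

end TwistedPolyRoots

section TwistedCode

variable (K L : Type*) [Field K] [Field L] [Algebra K L] (γ : L) (k : ℕ) (Λ : Finset L)

def twistedEvalₗ : (K × K × (Fin (k - 1) → L)) →ₗ[K] (Λ → L) where
  toFun := twistedEval K L γ k Λ
  map_add' p p' := by
    ext x
    simp only [twistedEval, Prod.fst_add, Prod.snd_add, Pi.add_apply, map_add, add_mul,
      sum_add_distrib]
    ring
  map_smul' c p := by
    ext x
    simp only [twistedEval, Prod.smul_fst, Prod.smul_snd, Pi.smul_apply, smul_eq_mul, map_mul,
      RingHom.id_apply]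
    simp only [Algebra.smul_def, mul_add, mul_sum, mul_assoc]
    ring

@[simp]
lemma coe_twistedEvalₗ : ⇑(twistedEvalₗ K L γ k Λ) = twistedEval K L γ k Λ := rfl

variable {K L γ k Λ}

lemma finrank_span_range_twistedEval (hdim : Module.finrank K L = 2) (hk : k ≠ 0)
    (hinj : Function.Injective (twistedEval K L γ k Λ)) :
    Module.finrank K (Submodule.span K (Set.range (twistedEval K L γ k Λ))) = 2 * k := by
  rw [← coe_twistedEvalₗ, ← LinearMap.coe_range, Submodule.span_eq,
    LinearMap.finrank_range_of_inj hinj]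
  have : Module.Finite K L := Module.finite_of_finrank_eq_succ hdim
  rw [Module.finrank_prod, Module.finrank_prod, Module.finrank_self, Module.finrank_pi_fintype]
  simp only [hdim, sum_const, card_univ, Fintype.card_fin, smul_eq_mul]
  omega

lemma le_hammingNorm_twistedEval [DecidableEq L] (hγ : γ ∉ (algebraMap K L).fieldRange)
    (hk : k ≠ 0) (hΛ : ∀ x ∈ Λ, ∃ c : K, c ≠ 0 ∧ x = algebraMap K L c)
    {p : K × K × (Fin (k - 1) → L)} (hp : p ≠ 0) :
    #Λ - (k - 1) ≤ hammingNorm (twistedEval K L γ k Λ p) := by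
  have hweight := hammingNorm_subtype_add_card_filter_eq_zero Λ (twistedPoly γ k p).eval
  have hzeros := card_filter_eval_twistedPoly_eq_zero_le hγ hk hΛ hp
  rw [twistedEval_eq]
  omega

lemma exists_hammingNorm_twistedEval_eq [DecidableEq L] (hk : k ≠ 0)
    (hΛ : ∀ x ∈ Λ, ∃ c : K, c ≠ 0 ∧ x = algebraMap K L c) (hkΛ : k - 1 ≤ #Λ) :
    ∃ p, hammingNorm (twistedEval K L γ k Λ p) = #Λ - (k - 1) := by
  obtain ⟨S, hSΛ, hS⟩ := exists_subset_card_eq hkΛ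
  set G : L[X] := ∏ a ∈ S, (X - C a)
  have hGdeg : G.natDegree < k := by
    rw [natDegree_prod_of_monic _ _ fun a _ => monic_X_sub_C a]
    simp [hS]
    omega
  have hG₀ : G.coeff 0 ∈ (algebraMap K L).fieldRange := by
    rw [coeff_zero_eq_eval_zero, eval_prod]
    refine prod_mem fun a ha => ?_
    obtain ⟨c, -, rfl⟩ := hΛ a (hSΛ ha)
    exact ⟨-c, by simp⟩
  have hzeros : {x ∈ Λ | G.eval x = 0} = S := by
    simp only [G, eval_prod, eval_sub, eval_X, eval_C, prod_eq_zero_iff, sub_eq_zero,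
      exists_eq_right', filter_mem_eq_inter, inter_eq_right.mpr hSΛ]
  obtain ⟨p, hp⟩ := exists_twistedPoly_eq γ hk hGdeg hG₀
  refine ⟨p, ?_⟩
  have hweight := hammingNorm_subtype_add_card_filter_eq_zero Λ G.eval
  rw [twistedEval_eq, hp]
  rw [hzeros] at hweight
  omega

end TwistedCode

theorem stmt17_general (q : ℕ) (K L : Type*) [Field K] [Field L] [Fintype K]
    [DecidableEq L] [Algebra K L]
    (hK : Fintype.card K = q)
    (hdim : Module.finrank K L = 2)
    (Λ : Finset L) (ℓ k : ℕ) (hΛcard : Λ.card = ℓ)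
    (hΛ : ∀ x ∈ Λ, ∃ c : K, c ≠ 0 ∧ x = algebraMap K L c)
    (hk : 1 ≤ k) (hkℓ : k ≤ ℓ - 1)
    (γ : L) (hγ : γ ≠ 0)
    (hns : ¬ ∃ s : K, s ≠ 0 ∧ algebraMap K L (s ^ 2) = γ ^ (q + 1)) :
    Module.finrank K (Submodule.span K (Set.range (twistedEval K L γ k Λ))) = 2 * k ∧
    (∀ p, twistedEval K L γ k Λ p ≠ 0 → ℓ - k + 1 ≤ hammingNorm (twistedEval K L γ k Λ p)) ∧
    (∃ p, twistedEval K L γ k Λ p ≠ 0 ∧ hammingNorm (twistedEval K L γ k Λ p) = ℓ - k + 1) := by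
  have hγK := notMem_fieldRange_of_forall_sq_ne hK hγ hns
  have hk₀ : k ≠ 0 := by omega
  have hweight (p) (hp : p ≠ 0) : ℓ - k + 1 ≤ hammingNorm (twistedEval K L γ k Λ p) := by
    have := le_hammingNorm_twistedEval hγK hk₀ hΛ hp
    omega
  have hinj : Function.Injective (twistedEvalₗ K L γ k Λ) := by
    refine (injective_iff_map_eq_zero _).mpr fun p hp => by_contra fun hne => ?_
    have := hweight p hne
    rw [coe_twistedEvalₗ] at hp
    rw [hp, hammingNorm_zero] at this
    omega
  refine ⟨finrank_span_range_twistedEval hdim hk₀ hinj, fun p hp => hweight p ?_, ?_⟩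
  · rintro rfl
    exact hp (map_zero (twistedEvalₗ K L γ k Λ))
  · obtain ⟨p, hp⟩ := exists_hammingNorm_twistedEval_eq (γ := γ) hk₀ hΛ (by omega)
    exact ⟨p, hammingNorm_ne_zero_iff.mp (by omega), by omega⟩

/-- If γ^{q+1} is not a square in F_q^*, the additive twisted RS code C_k(γ) has
F_q-dimension 2k and minimum Hamming distance exactly ℓ - k + 1 (additive MDS). -/
theorem stmt17 (q : ℕ) (K L : Type*) [Field K] [Field L] [Fintype K] [Fintype L]
    [DecidableEq L] [Algebra K L]
    (hK : Fintype.card K = q) (hL : Fintype.card L = q ^ 2)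
    (hdim : Module.finrank K L = 2)
    (Λ : Finset L) (ℓ k : ℕ) (hΛcard : Λ.card = ℓ)
    (hΛ : ∀ x ∈ Λ, ∃ c : K, c ≠ 0 ∧ x = algebraMap K L c)
    (hk : 1 ≤ k) (hkℓ : k ≤ ℓ - 1)
    (γ : L) (hγ : γ ≠ 0)
    (hns : ¬ ∃ s : K, s ≠ 0 ∧ algebraMap K L (s ^ 2) = γ ^ (q + 1)) :
    Module.finrank K (Submodule.span K (Set.range (twistedEval K L γ k Λ))) = 2 * k ∧
    (∀ p, twistedEval K L γ k Λ p ≠ 0 → ℓ - k + 1 ≤ hammingNorm (twistedEval K L γ k Λ p)) ∧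
    (∃ p, twistedEval K L γ k Λ p ≠ 0 ∧ hammingNorm (twistedEval K L γ k Λ p) = ℓ - k + 1) :=
  stmt17_general q K L hK hdim Λ ℓ k hΛcard hΛ hk hkℓ γ hγ hns
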